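/- arXiv:1210.0924 — 2 statements merged into one kernel-verified Lean document; each statement's English description precedes it below -/
import Mathlib

section
/- With notation as above (weight decompositions under λ, v ∈ V\{0}, w ∈ W\{0}, p(α)=log‖λ(α)·w‖²−log‖λ(α)·v‖²): if w_λ(w) > w_λ(v) then lim_{α→0} p(α) = −∞, and if w_λ(w) ≤ w_λ(v) then p is bounded below on {0 < |α| ≤ 1}. -/
/-!
Dividing `∑ a, α ^ a • c a` by `α ^ w₀`, where `w₀` is the lowest weight, leaves a polynomial in
`α` whose value at `0` is `c w₀ ≠ 0` and which does not vanish elsewhere because the weight spaces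
are independent. By compactness its norm is pinched between two positive constants on the closed
unit disk, so `log ‖λ(α) v‖ = w_λ(v) log ‖α‖ + O(1)` there. Hence
`p(α) = 2 (w_λ(w) - w_λ(v)) log ‖α‖ + O(1)`, and `log ‖α‖ ≤ 0` on the disk, tending to `-∞` at `0`.
-/

open Filter Topology

theorem mem_of_mem_submodule_of_ne_zero {ι R M : Type*} [Semiring R] [AddCommMonoid M]
    [Module R M] {p : ι → Submodule R M} {s : Finset ι} (hbot : ∀ i, i ∉ s → p i = ⊥)
    {i : ι} {x : M} (hx : x ∈ p i) (hx0 : x ≠ 0) : i ∈ s := by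
  by_contra hi
  rw [hbot i hi, Submodule.mem_bot] at hx
  exact hx0 hx

section WeightSums

variable {E : Type*} [NormedAddCommGroup E] [NormedSpace ℂ E]

-- `α ^ (-w₀) • ∑ a ∈ A, α ^ a • c a`, written with natural exponents so that it is a polynomial
-- in `α` once `w₀` is below every weight `a` with `c a ≠ 0`.
noncomputable def shiftedWeightSum (A : Finset ℤ) (c : ℤ → E) (w₀ : ℤ) (α : ℂ) : E :=
  ∑ a ∈ A, α ^ (a - w₀).toNat • c a

variable {A : Finset ℤ} {c : ℤ → E} {w₀ : ℤ}

theorem continuous_shiftedWeightSum (A : Finset ℤ) (c : ℤ → E) (w₀ : ℤ) :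
    Continuous (shiftedWeightSum A c w₀) := by
  unfold shiftedWeightSum
  fun_prop

theorem zpow_smul_shiftedWeightSum (hmin : ∀ a, c a ≠ 0 → w₀ ≤ a) {α : ℂ} (hα : α ≠ 0) :
    α ^ w₀ • shiftedWeightSum A c w₀ α = ∑ a ∈ A, α ^ a • c a := by
  rw [shiftedWeightSum, Finset.smul_sum]
  refine Finset.sum_congr rfl fun a _ => ?_
  rcases eq_or_ne (c a) 0 with h | h
  · simp [h]
  · rw [smul_smul, ← zpow_natCast, ← zpow_add₀ hα,
      Int.toNat_of_nonneg (sub_nonneg.2 (hmin a h)), add_sub_cancel]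

theorem shiftedWeightSum_zero (hmin : ∀ a, c a ≠ 0 → w₀ ≤ a) (hw₀ : w₀ ∈ A) :
    shiftedWeightSum A c w₀ 0 = c w₀ := by
  rw [shiftedWeightSum, Finset.sum_eq_single_of_mem w₀ hw₀ fun a _ ha => ?_]
  · simp
  rcases eq_or_ne (c a) 0 with h | h
  · simp [h]
  · have : (a - w₀).toNat ≠ 0 := by have := hmin a h; omega
    simp [zero_pow this]

theorem norm_shiftedWeightSum_le (A : Finset ℤ) (c : ℤ → E) (w₀ : ℤ) {α : ℂ} (hα : ‖α‖ ≤ 1) :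
    ‖shiftedWeightSum A c w₀ α‖ ≤ ∑ a ∈ A, ‖c a‖ := by
  refine (norm_sum_le _ _).trans (Finset.sum_le_sum fun a _ => ?_)
  rw [norm_smul, norm_pow]
  exact mul_le_of_le_one_left (norm_nonneg _) (pow_le_one₀ (norm_nonneg _) hα)

variable {Esub : ℤ → Submodule ℂ E}

theorem sum_zpow_smul_ne_zero (hind : iSupIndep Esub) (hmem : ∀ a, c a ∈ Esub a)
    (hw₀ : w₀ ∈ A) (hc : c w₀ ≠ 0) {α : ℂ} (hα : α ≠ 0) : ∑ a ∈ A, α ^ a • c a ≠ 0 := by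
  intro hsum
  have h := (iSupIndep_iff_finsetSum_eq_zero_imp_eq_zero Esub).1 hind A (fun a => α ^ a • c a)
    (fun a _ => (Esub a).smul_mem _ (hmem a)) hsum w₀ hw₀
  exact hc ((smul_eq_zero.1 h).resolve_left (zpow_ne_zero _ hα))

theorem shiftedWeightSum_ne_zero (hind : iSupIndep Esub) (hmem : ∀ a, c a ∈ Esub a)
    (hw₀ : w₀ ∈ A) (hc : c w₀ ≠ 0) (hmin : ∀ a, c a ≠ 0 → w₀ ≤ a) (α : ℂ) :
    shiftedWeightSum A c w₀ α ≠ 0 := by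
  rcases eq_or_ne α 0 with rfl | hα
  · rwa [shiftedWeightSum_zero hmin hw₀]
  · intro h
    apply sum_zpow_smul_ne_zero hind hmem hw₀ hc hα
    rw [← zpow_smul_shiftedWeightSum hmin hα, h, smul_zero]

theorem exists_pos_le_norm_shiftedWeightSum (hind : iSupIndep Esub) (hmem : ∀ a, c a ∈ Esub a)
    (hw₀ : w₀ ∈ A) (hc : c w₀ ≠ 0) (hmin : ∀ a, c a ≠ 0 → w₀ ≤ a) :
    ∃ k > 0, ∀ α : ℂ, ‖α‖ ≤ 1 → k ≤ ‖shiftedWeightSum A c w₀ α‖ := by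
  obtain ⟨α₀, -, hα₀⟩ := (isCompact_closedBall (0 : ℂ) 1).exists_isMinOn
    (Metric.nonempty_closedBall.2 zero_le_one) (continuous_shiftedWeightSum A c w₀).norm.continuousOn
  exact ⟨_, norm_pos_iff.2 (shiftedWeightSum_ne_zero hind hmem hw₀ hc hmin α₀),
    fun α hα => hα₀ (mem_closedBall_zero_iff.2 hα)⟩

theorem exists_abs_log_norm_sum_zpow_smul_sub_le (hind : iSupIndep Esub)
    (hmem : ∀ a, c a ∈ Esub a) (hw₀ : w₀ ∈ A) (hc : c w₀ ≠ 0) (hmin : ∀ a, c a ≠ 0 → w₀ ≤ a) :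
    ∃ C : ℝ, ∀ α : ℂ, α ≠ 0 → ‖α‖ ≤ 1 →
      |Real.log ‖∑ a ∈ A, α ^ a • c a‖ - w₀ * Real.log ‖α‖| ≤ C := by
  obtain ⟨k, hk, hkle⟩ := exists_pos_le_norm_shiftedWeightSum hind hmem hw₀ hc hmin
  refine ⟨max (-Real.log k) (Real.log (∑ a ∈ A, ‖c a‖)), fun α hα hα1 => ?_⟩
  have hpos : 0 < ‖shiftedWeightSum A c w₀ α‖ := hk.trans_le (hkle α hα1)
  have hlog : Real.log ‖∑ a ∈ A, α ^ a • c a‖ - w₀ * Real.log ‖α‖ =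
      Real.log ‖shiftedWeightSum A c w₀ α‖ := by
    rw [← zpow_smul_shiftedWeightSum hmin hα, norm_smul, norm_zpow,
      Real.log_mul (zpow_ne_zero _ (norm_ne_zero_iff.2 hα)) hpos.ne', Real.log_zpow]
    ring
  rw [hlog, abs_le]
  constructor
  · linarith [le_max_left (-Real.log k) (Real.log (∑ a ∈ A, ‖c a‖)),
      Real.log_le_log hk (hkle α hα1)]
  · exact (Real.log_le_log hpos (norm_shiftedWeightSum_le A c w₀ hα1)).trans (le_max_right _ _)

end WeightSums

theorem energy_asymptotics_along_one_parameter_subgroup_general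
    {V W : Type*} [NormedAddCommGroup V] [NormedSpace ℂ V]
    [NormedAddCommGroup W] [NormedSpace ℂ W]
    (Vsub : ℤ → Submodule ℂ V) (hIntV : DirectSum.IsInternal Vsub)
    (Wsub : ℤ → Submodule ℂ W) (hIntW : DirectSum.IsInternal Wsub)
    (A B : Finset ℤ) (hbotV : ∀ a : ℤ, a ∉ A → Vsub a = ⊥)
    (hbotW : ∀ b : ℤ, b ∉ B → Wsub b = ⊥)
    (c : ℤ → V) (hcmem : ∀ a, c a ∈ Vsub a)
    (d : ℤ → W) (hdmem : ∀ b, d b ∈ Wsub b)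
    (wv ww : ℤ)
    (hwv : c wv ≠ 0 ∧ ∀ a : ℤ, c a ≠ 0 → wv ≤ a)
    (hww : d ww ≠ 0 ∧ ∀ b : ℤ, d b ≠ 0 → ww ≤ b) :
    (wv < ww →
      Tendsto (fun α : ℂ =>
          Real.log (‖∑ b ∈ B, α ^ b • d b‖ ^ 2)
            - Real.log (‖∑ a ∈ A, α ^ a • c a‖ ^ 2)) (𝓝[≠] 0) atBot) ∧
    (ww ≤ wv →
      ∃ C : ℝ, ∀ α : ℂ, 0 < ‖α‖ → ‖α‖ ≤ 1 →
        C ≤ Real.log (‖∑ b ∈ B, α ^ b • d b‖ ^ 2)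
              - Real.log (‖∑ a ∈ A, α ^ a • c a‖ ^ 2)) := by
  obtain ⟨hcwv, hminv⟩ := hwv
  obtain ⟨hdww, hminw⟩ := hww
  obtain ⟨CV, hCV⟩ := exists_abs_log_norm_sum_zpow_smul_sub_le hIntV.submodule_iSupIndep hcmem
    (mem_of_mem_submodule_of_ne_zero hbotV (hcmem wv) hcwv) hcwv hminv
  obtain ⟨CW, hCW⟩ := exists_abs_log_norm_sum_zpow_smul_sub_le hIntW.submodule_iSupIndep hdmem
    (mem_of_mem_submodule_of_ne_zero hbotW (hdmem ww) hdww) hdww hminw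
  have key : ∀ α : ℂ, α ≠ 0 → ‖α‖ ≤ 1 →
      |Real.log (‖∑ b ∈ B, α ^ b • d b‖ ^ 2) - Real.log (‖∑ a ∈ A, α ^ a • c a‖ ^ 2)
        - 2 * (ww - wv : ℝ) * Real.log ‖α‖| ≤ 2 * (CV + CW) := by
    intro α hα hα1
    have hV := abs_le.1 (hCV α hα hα1)
    have hW := abs_le.1 (hCW α hα hα1)
    rw [Real.log_pow, Real.log_pow, abs_le]
    push_cast
    constructor <;> linarith [hV.1, hV.2, hW.1, hW.2]
  refine ⟨fun hlt => ?_, fun hle => ⟨-(2 * (CV + CW)), fun α hα hα1 => ?_⟩⟩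
  · have hslope : (0 : ℝ) < 2 * (ww - wv : ℝ) := by
      have : (wv : ℝ) < ww := by exact_mod_cast hlt
      linarith
    have hbound : Tendsto (fun α : ℂ => 2 * (ww - wv : ℝ) * Real.log ‖α‖ + 2 * (CV + CW))
        (𝓝[≠] 0) atBot :=
      tendsto_atBot_add_const_right _ _ ((Real.tendsto_log_nhdsGT_zero.comp
        tendsto_norm_nhdsNE_zero).const_mul_atBot hslope)
    refine tendsto_atBot_mono' _ ?_ hbound
    filter_upwards [self_mem_nhdsWithin,
      nhdsWithin_le_nhds (Metric.closedBall_mem_nhds (0 : ℂ) one_pos)] with α hα hα1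
    linarith [(abs_le.1 (key α hα (mem_closedBall_zero_iff.1 hα1))).2]
  · have hslope : 2 * (ww - wv : ℝ) ≤ 0 := by
      have : (ww : ℝ) ≤ wv := by exact_mod_cast hle
      linarith
    have := mul_nonneg_of_nonpos_of_nonpos hslope (Real.log_nonpos (norm_nonneg α) hα1)
    linarith [(abs_le.1 (key α (norm_pos_iff.1 hα) hα1)).1]

/-- With the weight decomposition notation as before and
`p(α) = log‖λ(α)·w‖² - log‖λ(α)·v‖²` : if `w_λ(w) > w_λ(v)` then `p(α) → -∞` as
`α → 0`, while if `w_λ(w) ≤ w_λ(v)` then `p` is bounded below on `{0 < |α| ≤ 1}`. -/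
theorem energy_asymptotics_along_one_parameter_subgroup
    {V W : Type*} [NormedAddCommGroup V] [NormedSpace ℂ V] [FiniteDimensional ℂ V]
    [NormedAddCommGroup W] [NormedSpace ℂ W] [FiniteDimensional ℂ W]
    (Vsub : ℤ → Submodule ℂ V) (hIntV : DirectSum.IsInternal Vsub)
    (Wsub : ℤ → Submodule ℂ W) (hIntW : DirectSum.IsInternal Wsub)
    (A B : Finset ℤ) (hbotV : ∀ a : ℤ, a ∉ A → Vsub a = ⊥)
    (hbotW : ∀ b : ℤ, b ∉ B → Wsub b = ⊥)
    (v : V) (hv : v ≠ 0) (w : W) (hw : w ≠ 0)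
    (c : ℤ → V) (hcmem : ∀ a, c a ∈ Vsub a) (hvsum : v = ∑ a ∈ A, c a)
    (d : ℤ → W) (hdmem : ∀ b, d b ∈ Wsub b) (hwsum : w = ∑ b ∈ B, d b)
    (wv ww : ℤ)
    (hwv : c wv ≠ 0 ∧ ∀ a : ℤ, c a ≠ 0 → wv ≤ a)
    (hww : d ww ≠ 0 ∧ ∀ b : ℤ, d b ≠ 0 → ww ≤ b) :
    (wv < ww →
      Tendsto (fun α : ℂ =>
          Real.log (‖∑ b ∈ B, α ^ b • d b‖ ^ 2)
            - Real.log (‖∑ a ∈ A, α ^ a • c a‖ ^ 2)) (𝓝[≠] 0) atBot) ∧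
    (ww ≤ wv →
      ∃ C : ℝ, ∀ α : ℂ, 0 < ‖α‖ → ‖α‖ ≤ 1 →
        C ≤ Real.log (‖∑ b ∈ B, α ^ b • d b‖ ^ 2)
              - Real.log (‖∑ a ∈ A, α ^ a • c a‖ ^ 2)) :=
  energy_asymptotics_along_one_parameter_subgroup_general Vsub hIntV Wsub hIntW A B hbotV hbotW c
    hcmem d hdmem wv ww hwv hww
end

section
/- Let G be a topological group acting continuously by linear maps on finite-dimensional complex inner product spaces V and W, preserving no structure in particular. For nonzero v ∈ V, w ∈ W define p_{v,w}(σ) := log‖σ·w‖² − log‖σ·v‖², and let O_{vw} = G·[(v,w)] and O_v = G·[(v,0)] be the orbits in P(V ⊕ W) with Fubini–Study distance d_g. Then inf_{σ∈G} p_{v,w}(σ) = log tan² d_g( cl(O_{vw}), cl(O_v) ), where d_g(A,B) denotes the infimum of distances between the closures of the two orbits. In particular p_{v,w} is bounded below on G if and only if the closures of O_{vw} and O_v are disjoint. -/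
open Filter Topology

/-- Fubini–Study distance between the lines spanned by two (nonzero) vectors:
`cos d = |⟨x,y⟩| / (‖x‖‖y‖)`, `d ∈ [0, π/2]`. -/
noncomputable def fubiniStudyDist {E : Type*} [NormedAddCommGroup E]
    [InnerProductSpace ℂ E] (x y : E) : ℝ :=
  Real.arccos (‖(inner ℂ x y : ℂ)‖ / (‖x‖ * ‖y‖))

/-- The diagonal action of `σ ∈ G` on `V ⊕ W` (with the `ℓ²` inner product). -/
noncomputable def diagAct {G V W : Type*} [Group G]
    [NormedAddCommGroup V] [InnerProductSpace ℂ V]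
    [NormedAddCommGroup W] [InnerProductSpace ℂ W]
    (ρ : G →* V ≃ₗ[ℂ] V) (τ : G →* W ≃ₗ[ℂ] W) (σ : G) (x : V × W) :
    WithLp 2 (V × W) :=
  (WithLp.equiv 2 (V × W)).symm (ρ σ x.1, τ σ x.2)

/-- The orbit of `[x]` in `ℙ(V ⊕ W)`, modelled by the unit-normalized vectors
`σ·x / ‖σ·x‖` in the (compact) unit sphere of `V ⊕ W`. -/
noncomputable def projOrbit {G V W : Type*} [Group G]
    [NormedAddCommGroup V] [InnerProductSpace ℂ V]
    [NormedAddCommGroup W] [InnerProductSpace ℂ W]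
    (ρ : G →* V ≃ₗ[ℂ] V) (τ : G →* W ≃ₗ[ℂ] W) (x : V × W) :
    Set (WithLp 2 (V × W)) :=
  Set.range fun σ : G => ‖diagAct ρ τ σ x‖⁻¹ • diagAct ρ τ σ x

/-! Write `θ σ` for the Fubini–Study distance between `σ·[(v,w)]` and `σ·[(v,0)]`.
For any `x`, the point of `ℙ(V ⊕ 0)` nearest to `[x]` is `[(x₁, 0)]`, at distance
`arccos (‖x₁‖ / ‖x‖)`; as a lower bound on this angle is a closed condition on unit vectors,
it passes to the orbit closures, and the distance between the closures is `⨅ σ, θ σ`.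
Since `tan² θ σ = ‖σ·w‖² / ‖σ·v‖²` and `log tan²` is an increasing bijection
`(0, π/2) → ℝ`, the infimum of `p_{v,w}` is `log tan² (⨅ σ, θ σ)`, or `-∞` when that
infimum is `0`. Disjoint closures are at positive chordal distance, and the chord between
the two normalized orbit points is at most `θ σ`, so then `⨅ σ, θ σ > 0`. -/

open Real Set
open scoped ComplexOrder

section FubiniStudy

variable {E : Type*} [NormedAddCommGroup E] [InnerProductSpace ℂ E]

theorem fubiniStudyDist_comm (x y : E) : fubiniStudyDist x y = fubiniStudyDist y x := by
  rw [fubiniStudyDist, fubiniStudyDist, norm_inner_symm, mul_comm]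

theorem fubiniStudyDist_smul_left {r : ℝ} (hr : r ≠ 0) (x y : E) :
    fubiniStudyDist (r • x) y = fubiniStudyDist x y := by
  rw [fubiniStudyDist, fubiniStudyDist, ← Complex.coe_smul, inner_smul_left, norm_mul,
    RCLike.norm_conj, norm_smul, mul_assoc, mul_div_mul_left _ _ (by simpa using hr)]

theorem fubiniStudyDist_smul_right {r : ℝ} (hr : r ≠ 0) (x y : E) :
    fubiniStudyDist x (r • y) = fubiniStudyDist x y := by
  rw [fubiniStudyDist_comm, fubiniStudyDist_smul_left hr, fubiniStudyDist_comm]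

theorem fubiniStudyDist_self {x : E} (hx : x ≠ 0) : fubiniStudyDist x x = 0 := by
  simp [fubiniStudyDist, inner_self_eq_norm_sq_to_K, sq, hx]

theorem norm_sub_le_fubiniStudyDist {x y : E} (hx : ‖x‖ = 1) (hy : ‖y‖ = 1)
    (hxy : 0 ≤ inner ℂ x y) : ‖x - y‖ ≤ fubiniStudyDist x y := by
  have hcos : cos (fubiniStudyDist x y) = (inner ℂ x y).re := by
    have hle : ‖inner ℂ x y‖ ≤ 1 := by simpa [hx, hy] using norm_inner_le_norm (𝕜 := ℂ) x y
    rw [fubiniStudyDist, hx, hy, mul_one, div_one,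
      cos_arccos (by linarith [norm_nonneg (inner ℂ x y)]) hle, Complex.re_eq_norm.2 hxy]
  have hsq : ‖x - y‖ ^ 2 ≤ fubiniStudyDist x y ^ 2 := by
    rw [@norm_sub_sq ℂ, hx, hy, RCLike.re_to_complex, ← hcos]
    linarith [one_sub_sq_div_two_le_cos (x := fubiniStudyDist x y)]
  exact (pow_le_pow_iff_left₀ (norm_nonneg _) (arccos_nonneg _) two_ne_zero).1 hsq

end FubiniStudy

section ProdL2Norm

variable {V W : Type*} [NormedAddCommGroup V] [NormedAddCommGroup W]

theorem arccos_norm_fst_div_norm_mem_Ioo {x : WithLp 2 (V × W)} (h₁ : x.fst ≠ 0)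
    (h₂ : x.snd ≠ 0) : arccos (‖x.fst‖ / ‖x‖) ∈ Ioo 0 (π / 2) := by
  have hsq := WithLp.prod_norm_sq_eq_of_L2 x
  have hfst : 0 < ‖x.fst‖ := norm_pos_iff.2 h₁
  have hlt : ‖x.fst‖ < ‖x‖ := by
    have := norm_pos_iff.2 h₂
    nlinarith [norm_nonneg x]
  refine ⟨arccos_pos.2 ((div_lt_one (hfst.trans hlt)).2 hlt), arccos_lt_pi_div_two.2 ?_⟩
  exact div_pos hfst (hfst.trans hlt)

theorem tan_arccos_norm_fst_div_norm_sq {x : WithLp 2 (V × W)} (h : x.fst ≠ 0) :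
    tan (arccos (‖x.fst‖ / ‖x‖)) ^ 2 = ‖x.snd‖ ^ 2 / ‖x.fst‖ ^ 2 := by
  have hsq := WithLp.prod_norm_sq_eq_of_L2 x
  have hfst : 0 < ‖x.fst‖ := norm_pos_iff.2 h
  have hx : 0 < ‖x‖ := hfst.trans_le (WithLp.norm_fst_le (x := x))
  have hle : (‖x.fst‖ / ‖x‖) ^ 2 ≤ 1 :=
    pow_le_one₀ (by positivity) (div_le_one_of_le₀ (WithLp.norm_fst_le (x := x)) hx.le)
  rw [tan_arccos, div_pow, sq_sqrt (sub_nonneg.2 hle)]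
  field_simp
  linarith

end ProdL2Norm

section ProdL2

variable {V W : Type*} [NormedAddCommGroup V] [InnerProductSpace ℂ V]
  [NormedAddCommGroup W] [InnerProductSpace ℂ W]

theorem inner_toLp_fst_zero (x : WithLp 2 (V × W)) :
    inner ℂ x (WithLp.toLp 2 (x.fst, (0 : W))) = ((‖x.fst‖ ^ 2 : ℝ) : ℂ) := by
  simp [inner_self_eq_norm_sq_to_K]

theorem fubiniStudyDist_toLp_fst_zero (x : WithLp 2 (V × W)) :
    fubiniStudyDist x (WithLp.toLp 2 (x.fst, (0 : W))) = arccos (‖x.fst‖ / ‖x‖) := by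
  rw [fubiniStudyDist, inner_toLp_fst_zero, WithLp.norm_toLp_fst, Complex.norm_real,
    Real.norm_of_nonneg (by positivity), sq]
  rcases eq_or_ne ‖x.fst‖ 0 with h | h
  · simp [h]
  · rw [mul_div_mul_right _ _ h]

theorem arccos_norm_fst_div_norm_le_fubiniStudyDist (x : WithLp 2 (V × W))
    {y : WithLp 2 (V × W)} (hy : y.snd = 0) :
    arccos (‖x.fst‖ / ‖x‖) ≤ fubiniStudyDist x y := by
  refine arccos_le_arccos ?_
  have hinner : ‖inner ℂ x y‖ ≤ ‖x.fst‖ * ‖y‖ := by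
    simp only [WithLp.prod_inner_apply, WithLp.ofLp_fst, WithLp.ofLp_snd, hy, inner_zero_right,
      add_zero]
    exact (norm_inner_le_norm _ _).trans (by gcongr; exact WithLp.norm_fst_le (x := y))
  calc ‖inner ℂ x y‖ / (‖x‖ * ‖y‖) ≤ ‖x.fst‖ * ‖y‖ / (‖x‖ * ‖y‖) := by gcongr
    _ = ‖x.fst‖ / ‖x‖ * (‖y‖ / ‖y‖) := by rw [div_mul_div_comm]
    _ ≤ ‖x.fst‖ / ‖x‖ := mul_le_of_le_one_right (by positivity) (div_self_le_one _)

end ProdL2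

section LogTanSq

variable {ι : Type*} [Nonempty ι] {θ : ι → ℝ}

theorem le_log_tan_sq_iff {t : ℝ} (ht : t ∈ Ioo 0 (π / 2)) (c : ℝ) :
    c ≤ log (tan t ^ 2) ↔ arctan (exp (c / 2)) ≤ t := by
  have htan : 0 < tan t := tan_pos_of_pos_of_lt_pi_div_two ht.1 ht.2
  rw [log_pow, Nat.cast_ofNat, ← div_le_iff₀' two_pos, le_log_iff_exp_le htan,
    ← arctan_le_arctan_iff, arctan_tan (by linarith [ht.1, pi_pos]) ht.2]

theorem forall_le_log_tan_sq_iff (hθ : ∀ i, θ i ∈ Ioo 0 (π / 2)) (c : ℝ) :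
    (∀ i, c ≤ log (tan (θ i) ^ 2)) ↔ arctan (exp (c / 2)) ≤ ⨅ i, θ i := by
  rw [le_ciInf_iff ⟨0, forall_mem_range.2 fun i => (hθ i).1.le⟩]
  exact forall_congr' fun i => le_log_tan_sq_iff (hθ i) c

theorem iInf_lt_pi_div_two (hθ : ∀ i, θ i ∈ Ioo 0 (π / 2)) : ⨅ i, θ i < π / 2 :=
  (ciInf_le ⟨0, forall_mem_range.2 fun i => (hθ i).1.le⟩ (Classical.arbitrary ι)).trans_lt
    (hθ _).2

theorem bddBelow_range_log_tan_sq_iff (hθ : ∀ i, θ i ∈ Ioo 0 (π / 2)) :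
    BddBelow (range fun i => log (tan (θ i) ^ 2)) ↔ 0 < ⨅ i, θ i := by
  constructor
  · rintro ⟨c, hc⟩
    exact (arctan_pos.2 (exp_pos _)).trans_le
      ((forall_le_log_tan_sq_iff hθ c).1 fun i => hc ⟨i, rfl⟩)
  · intro hpos
    refine ⟨log (tan (⨅ i, θ i) ^ 2), forall_mem_range.2 ((forall_le_log_tan_sq_iff hθ _).2 ?_)⟩
    exact (le_log_tan_sq_iff ⟨hpos, iInf_lt_pi_div_two hθ⟩ _).1 le_rfl

theorem iInf_coe_log_tan_sq (hθ : ∀ i, θ i ∈ Ioo 0 (π / 2)) :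
    ⨅ i, ((log (tan (θ i) ^ 2) : ℝ) : EReal)
      = if ⨅ i, θ i = 0 then ⊥ else ((log (tan (⨅ i, θ i) ^ 2) : ℝ) : EReal) := by
  have hnonneg : 0 ≤ ⨅ i, θ i := le_ciInf fun i => (hθ i).1.le
  apply le_antisymm
  · refine iInf_le_iff.2 fun b hb => ?_
    induction b using EReal.rec with
    | bot => exact bot_le
    | top => exact absurd (hb (Classical.arbitrary ι)) (EReal.coe_lt_top _).not_ge
    | coe c =>
      have hc := (forall_le_log_tan_sq_iff hθ c).1 fun i => EReal.coe_le_coe_iff.1 (hb i)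
      have hpos : 0 < ⨅ i, θ i := (arctan_pos.2 (exp_pos _)).trans_le hc
      rw [if_neg hpos.ne', EReal.coe_le_coe_iff, le_log_tan_sq_iff ⟨hpos, iInf_lt_pi_div_two hθ⟩]
      exact hc
  · split_ifs with h
    · exact bot_le
    · have hpos : 0 < ⨅ i, θ i := lt_of_le_of_ne hnonneg (Ne.symm h)
      refine le_iInf fun i => EReal.coe_le_coe_iff.2 ((forall_le_log_tan_sq_iff hθ _).2 ?_ i)
      exact (le_log_tan_sq_iff ⟨hpos, iInf_lt_pi_div_two hθ⟩ _).1 le_rfl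

end LogTanSq

section Orbit

variable {G V W : Type*} [Group G] [NormedAddCommGroup V] [InnerProductSpace ℂ V]
  [NormedAddCommGroup W] [InnerProductSpace ℂ W] (ρ : G →* V ≃ₗ[ℂ] V) (τ : G →* W ≃ₗ[ℂ] W)

noncomputable def orbitPoint (x : V × W) (σ : G) : WithLp 2 (V × W) :=
  ‖diagAct ρ τ σ x‖⁻¹ • diagAct ρ τ σ x

theorem projOrbit_eq_range (x : V × W) : projOrbit ρ τ x = range (orbitPoint ρ τ x) := rfl

@[simp]
theorem diagAct_fst (σ : G) (x : V × W) : (diagAct ρ τ σ x).fst = ρ σ x.1 := rfl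

@[simp]
theorem diagAct_snd (σ : G) (x : V × W) : (diagAct ρ τ σ x).snd = τ σ x.2 := rfl

theorem diagAct_ne_zero {x : V × W} (hx : x.1 ≠ 0) (σ : G) : diagAct ρ τ σ x ≠ 0 := by
  intro h
  simpa [hx] using congrArg WithLp.fst h

theorem norm_orbitPoint {x : V × W} (hx : x.1 ≠ 0) (σ : G) : ‖orbitPoint ρ τ x σ‖ = 1 :=
  norm_smul_inv_norm (𝕜 := ℝ) (diagAct_ne_zero ρ τ hx σ)

theorem diagAct_eq_toLp_fst_zero (v : V) (w : W) (σ : G) :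
    diagAct ρ τ σ (v, 0) = WithLp.toLp 2 ((diagAct ρ τ σ (v, w)).fst, (0 : W)) := by
  simp [diagAct]

noncomputable def diagAngle (v : V) (w : W) (σ : G) : ℝ :=
  fubiniStudyDist (orbitPoint ρ τ (v, w) σ) (orbitPoint ρ τ (v, 0) σ)

variable {v : V} {w : W}

theorem diagAngle_eq_arccos (hv : v ≠ 0) (σ : G) :
    diagAngle ρ τ v w σ = arccos (‖ρ σ v‖ / ‖diagAct ρ τ σ (v, w)‖) := by
  have hne (x : V × W) (hx : x.1 ≠ 0) : ‖diagAct ρ τ σ x‖⁻¹ ≠ 0 :=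
    inv_ne_zero (norm_ne_zero_iff.2 (diagAct_ne_zero ρ τ hx σ))
  rw [diagAngle, orbitPoint, orbitPoint, fubiniStudyDist_smul_left (hne _ hv),
    fubiniStudyDist_smul_right (hne _ hv), diagAct_eq_toLp_fst_zero ρ τ v w,
    fubiniStudyDist_toLp_fst_zero, diagAct_fst]

theorem diagAngle_mem_Ioo (hv : v ≠ 0) (hw : w ≠ 0) (σ : G) :
    diagAngle ρ τ v w σ ∈ Ioo 0 (π / 2) := by
  rw [diagAngle_eq_arccos ρ τ hv, ← diagAct_fst ρ τ σ (v, w)]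
  exact arccos_norm_fst_div_norm_mem_Ioo (by simpa using hv) (by simpa using hw)

theorem log_sub_log_eq_log_tan_sq_diagAngle (hv : v ≠ 0) (hw : w ≠ 0) (σ : G) :
    log (‖τ σ w‖ ^ 2) - log (‖ρ σ v‖ ^ 2) = log (tan (diagAngle ρ τ v w σ) ^ 2) := by
  rw [diagAngle_eq_arccos ρ τ hv, ← diagAct_fst ρ τ σ (v, w),
    tan_arccos_norm_fst_div_norm_sq (by simpa using hv), diagAct_fst, diagAct_snd,
    log_div (by simpa using hw) (by simpa using hv)]

theorem inner_orbitPoint_nonneg (v : V) (w : W) (σ : G) :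
    0 ≤ inner ℂ (orbitPoint ρ τ (v, w) σ) (orbitPoint ρ τ (v, 0) σ) := by
  unfold orbitPoint
  rw [diagAct_eq_toLp_fst_zero ρ τ v w, ← Complex.coe_smul, ← Complex.coe_smul, inner_smul_left,
    inner_smul_right, inner_toLp_fst_zero, Complex.conj_ofReal, ← Complex.ofReal_mul,
    ← Complex.ofReal_mul]
  exact Complex.zero_le_real.2 (by positivity)

theorem closure_projOrbit_subset_sphere {x : V × W} (hx : x.1 ≠ 0) :
    closure (projOrbit ρ τ x) ⊆ Metric.sphere 0 1 :=
  closure_minimal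
    (range_subset_iff.2 fun σ => mem_sphere_zero_iff_norm.2 (norm_orbitPoint ρ τ hx σ))
    Metric.isClosed_sphere

theorem closure_projOrbit_subset_snd_eq_zero (v : V) :
    closure (projOrbit ρ τ (v, 0)) ⊆ {y | y.snd = 0} :=
  closure_minimal (range_subset_iff.2 fun σ => by simp [diagAct])
    (isClosed_eq (WithLp.continuous_snd 2 V W) continuous_const)

theorem iInf_diagAngle_le_fubiniStudyDist (hv : v ≠ 0) {x y : WithLp 2 (V × W)}
    (hx : x ∈ closure (projOrbit ρ τ (v, w))) (hy : y ∈ closure (projOrbit ρ τ (v, 0))) :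
    ⨅ σ, diagAngle ρ τ v w σ ≤ fubiniStudyDist x y := by
  set β := ⨅ σ, diagAngle ρ τ v w σ
  have hbdd : BddBelow (range (diagAngle ρ τ v w)) :=
    ⟨0, forall_mem_range.2 fun σ => arccos_nonneg _⟩
  have hsub : closure (projOrbit ρ τ (v, w)) ⊆ {x | ‖x‖ = 1 ∧ β ≤ arccos ‖x.fst‖} := by
    rw [projOrbit_eq_range]
    refine closure_minimal (range_subset_iff.2 fun σ => ⟨norm_orbitPoint ρ τ hv σ, ?_⟩) ?_
    · rw [orbitPoint, WithLp.smul_fst, norm_smul, norm_inv, norm_norm, inv_mul_eq_div,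
        diagAct_fst, ← diagAngle_eq_arccos ρ τ hv]
      exact ciInf_le hbdd σ
    · exact (isClosed_eq continuous_norm continuous_const).inter
        (isClosed_le continuous_const
          (continuous_arccos.comp (continuous_norm.comp (WithLp.continuous_fst 2 V W))))
  obtain ⟨hx1, hβ⟩ := hsub hx
  calc β ≤ arccos (‖x.fst‖ / ‖x‖) := by rwa [hx1, div_one]
    _ ≤ fubiniStudyDist x y := arccos_norm_fst_div_norm_le_fubiniStudyDist x
      (closure_projOrbit_subset_snd_eq_zero ρ τ v hy)

theorem sInf_fubiniStudyDist_closure_projOrbit (hv : v ≠ 0) :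
    sInf {r : ℝ | ∃ x ∈ closure (projOrbit ρ τ (v, w)),
        ∃ y ∈ closure (projOrbit ρ τ (v, 0)), r = fubiniStudyDist x y}
      = ⨅ σ, diagAngle ρ τ v w σ := by
  have hdiag (σ : G) : ∃ x ∈ closure (projOrbit ρ τ (v, w)),
      ∃ y ∈ closure (projOrbit ρ τ (v, 0)), diagAngle ρ τ v w σ = fubiniStudyDist x y :=
    ⟨_, subset_closure ⟨σ, rfl⟩, _, subset_closure ⟨σ, rfl⟩, rfl⟩
  refine IsGLB.csInf_eq ⟨?_, fun b hb => le_ciInf fun σ => hb (hdiag σ)⟩ ⟨_, hdiag 1⟩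
  rintro _ ⟨x, hx, y, hy, rfl⟩
  exact iInf_diagAngle_le_fubiniStudyDist ρ τ hv hx hy

theorem disjoint_closure_projOrbit_iff [FiniteDimensional ℂ V] [FiniteDimensional ℂ W]
    (hv : v ≠ 0) :
    Disjoint (closure (projOrbit ρ τ (v, w))) (closure (projOrbit ρ τ (v, 0)))
      ↔ 0 < ⨅ σ, diagAngle ρ τ v w σ := by
  constructor
  · intro hdisj
    have hcompact : IsCompact (closure (projOrbit ρ τ (v, w))) :=
      (isCompact_sphere 0 1).of_isClosed_subset isClosed_closure
        (closure_projOrbit_subset_sphere ρ τ hv)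
    obtain ⟨ε, hε, hsep⟩ := Metric.exists_pos_forall_lt_edist hcompact isClosed_closure hdisj
    refine (NNReal.coe_pos.2 hε).trans_le (le_ciInf fun σ => ?_)
    have hmem (x : V × W) : orbitPoint ρ τ x σ ∈ closure (projOrbit ρ τ x) :=
      subset_closure ⟨σ, rfl⟩
    calc (ε : ℝ) ≤ dist (orbitPoint ρ τ (v, w) σ) (orbitPoint ρ τ (v, 0) σ) := by
          have hlt := hsep _ (hmem _) _ (hmem _)
          rw [edist_dist, ENNReal.coe_lt_ofReal] at hlt
          exact hlt.le
      _ = ‖orbitPoint ρ τ (v, w) σ - orbitPoint ρ τ (v, 0) σ‖ := dist_eq_norm _ _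
      _ ≤ diagAngle ρ τ v w σ :=
        norm_sub_le_fubiniStudyDist (norm_orbitPoint ρ τ hv σ) (norm_orbitPoint ρ τ hv σ)
          (inner_orbitPoint_nonneg ρ τ v w σ)
  · intro hpos
    refine Set.disjoint_left.2 fun z hzA hzB => hpos.not_ge ?_
    have hz : z ≠ 0 :=
      ne_zero_of_mem_unit_sphere ⟨z, closure_projOrbit_subset_sphere ρ τ hv hzA⟩
    simpa [fubiniStudyDist_self hz] using iInf_diagAngle_le_fubiniStudyDist ρ τ hv hzA hzB

end Orbit

theorem inf_energy_eq_log_tan_sq_dist_general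
    {G V W : Type*} [Group G]
    [NormedAddCommGroup V] [InnerProductSpace ℂ V] [FiniteDimensional ℂ V]
    [NormedAddCommGroup W] [InnerProductSpace ℂ W] [FiniteDimensional ℂ W]
    (ρ : G →* V ≃ₗ[ℂ] V) (τ : G →* W ≃ₗ[ℂ] W)
    (v : V) (hv : v ≠ 0) (w : W) (hw : w ≠ 0)
    (δ : ℝ)
    (hδ : δ = sInf {r : ℝ | ∃ x ∈ closure (projOrbit ρ τ (v, w)),
        ∃ y ∈ closure (projOrbit ρ τ (v, 0)), r = fubiniStudyDist x y}) :
    (⨅ σ : G, ((Real.log (‖τ σ w‖ ^ 2) - Real.log (‖ρ σ v‖ ^ 2) : ℝ) : EReal))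
        = (if δ = 0 then (⊥ : EReal)
            else ((Real.log (Real.tan δ ^ 2) : ℝ) : EReal)) ∧
    (BddBelow (Set.range fun σ : G =>
        Real.log (‖τ σ w‖ ^ 2) - Real.log (‖ρ σ v‖ ^ 2))
      ↔ Disjoint (closure (projOrbit ρ τ (v, w)))
          (closure (projOrbit ρ τ (v, 0)))) := by
  rw [sInf_fubiniStudyDist_closure_projOrbit ρ τ hv] at hδ
  subst hδ
  have hθ := diagAngle_mem_Ioo ρ τ hv hw
  simp_rw [log_sub_log_eq_log_tan_sq_diagAngle ρ τ hv hw]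
  exact ⟨iInf_coe_log_tan_sq hθ,
    (bddBelow_range_log_tan_sq_iff hθ).trans (disjoint_closure_projOrbit_iff ρ τ hv).symm⟩

/-- Kempf–Ness energy: `inf_{σ ∈ G} p_{v,w}(σ) = log tan² d_g(cl O_{vw}, cl O_v)`
(with `log tan² 0 = -∞`), and `p_{v,w}` is bounded below on `G` iff the closures of
the orbits `O_{vw}` and `O_v` in `ℙ(V ⊕ W)` are disjoint. -/
theorem inf_energy_eq_log_tan_sq_dist
    {G V W : Type*} [Group G] [TopologicalSpace G] [IsTopologicalGroup G]
    [NormedAddCommGroup V] [InnerProductSpace ℂ V] [FiniteDimensional ℂ V]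
    [NormedAddCommGroup W] [InnerProductSpace ℂ W] [FiniteDimensional ℂ W]
    (ρ : G →* V ≃ₗ[ℂ] V) (τ : G →* W ≃ₗ[ℂ] W)
    (hρ : Continuous fun q : G × V => ρ q.1 q.2)
    (hτ : Continuous fun q : G × W => τ q.1 q.2)
    (v : V) (hv : v ≠ 0) (w : W) (hw : w ≠ 0)
    (δ : ℝ)
    (hδ : δ = sInf {r : ℝ | ∃ x ∈ closure (projOrbit ρ τ (v, w)),
        ∃ y ∈ closure (projOrbit ρ τ (v, 0)), r = fubiniStudyDist x y}) :
    (⨅ σ : G, ((Real.log (‖τ σ w‖ ^ 2) - Real.log (‖ρ σ v‖ ^ 2) : ℝ) : EReal))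
        = (if δ = 0 then (⊥ : EReal)
            else ((Real.log (Real.tan δ ^ 2) : ℝ) : EReal)) ∧
    (BddBelow (Set.range fun σ : G =>
        Real.log (‖τ σ w‖ ^ 2) - Real.log (‖ρ σ v‖ ^ 2))
      ↔ Disjoint (closure (projOrbit ρ τ (v, w)))
          (closure (projOrbit ρ τ (v, 0)))) :=
  inf_energy_eq_log_tan_sq_dist_general ρ τ v hv w hw δ hδ
end
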